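/- arXiv:1712.04106 — 2 statements merged into one kernel-verified Lean document; each statement's English description precedes it below -/
import Mathlib

section
/- Let Σ = μ x xᵀ with μ > 0 and x a unit vector in ℝ^n. Then for any symmetric positive semidefinite matrix X with trace 1, ⟨Σ, x xᵀ − X⟩ ≥ (μ/2)‖x xᵀ − X‖_F², where ⟨·,·⟩ is the trace inner product. -/
open Finset Matrix

/-- For a real PSD matrix, the square of any entry is bounded by the product of the
corresponding diagonal entries (a 2×2 principal-minor / Cauchy–Schwarz fact). -/
lemma psd_entry_sq {n : ℕ} {X : Matrix (Fin n) (Fin n) ℝ} (hX : X.PosSemidef)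
    (i j : Fin n) : X i j ^ 2 ≤ X i i * X j j := by
  rcases eq_or_ne i j with rfl | hij
  · nlinarith
  · have hsym : X j i = X i j := by
      have := hX.1.apply j i
      simpa using this.symm
    have hq : ∀ a b : ℝ, 0 ≤ a^2 * X i i + 2*a*b*(X i j) + b^2 * X j j := by
      intro a b
      have h := hX.dotProduct_mulVec_nonneg (fun k => (if k = i then a else 0) + (if k = j then b else 0))
      simp only [star_trivial, dotProduct, Matrix.mulVec, mul_add, add_mul,
        Finset.sum_add_distrib, mul_ite, mul_zero, ite_mul, zero_mul,
        Finset.sum_ite_eq', Finset.mem_univ, if_true] at h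
      rw [hsym] at h; nlinarith [h]
    have hii : 0 ≤ X i i := by have := hq 1 0; linarith
    have hjj : 0 ≤ X j j := by have := hq 0 1; linarith
    rcases lt_or_eq_of_le hii with hpos | h0
    · have h1 := hq (X i j) (-(X i i))
      nlinarith [h1, hpos]
    · rcases eq_or_ne (X i j) 0 with hz | hz
      · simp [hz]; exact mul_nonneg hii hjj
      · exfalso
        have h := hq (-(X j j + 1)/(2 * X i j)) 1
        rw [← h0] at h
        have h2 : (2:ℝ) * (-(X j j + 1)/(2 * X i j)) * 1 * X i j = -(X j j + 1) := by
          field_simp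
        nlinarith [h, h2]

/-- Curvature of the expected objective: for `Σ = μ x xᵀ` with `μ > 0` and `x` a unit
vector, and any PSD matrix `X` of trace 1,
`⟨Σ, x xᵀ − X⟩ ≥ (μ/2) ‖x xᵀ − X‖_F²`. -/
theorem curvature_of_expected_objective {n : ℕ} (μ : ℝ) (hμ : 0 < μ)
    (x : Fin n → ℝ) (hunit : ∑ i, x i ^ 2 = 1)
    (X : Matrix (Fin n) (Fin n) ℝ) (hX : X.PosSemidef) (htr : X.trace = 1) :
    (μ / 2) * ∑ i, ∑ j, ((Matrix.vecMulVec x x - X) i j) ^ 2 ≤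
      ∑ i, ∑ j, (μ • Matrix.vecMulVec x x) i j * ((Matrix.vecMulVec x x - X) i j) := by
  have htr' : ∑ i, X i i = 1 := by simpa [Matrix.trace, Matrix.diag] using htr
  have hB : ∑ i, ∑ j, X i j ^ 2 ≤ 1 := by
    calc ∑ i, ∑ j, X i j ^ 2 ≤ ∑ i, ∑ j, X i i * X j j :=
          Finset.sum_le_sum fun i _ => Finset.sum_le_sum fun j _ => psd_entry_sq hX i j
      _ = (∑ i, X i i) * (∑ j, X j j) := (Finset.sum_mul_sum _ _ _ _).symm
      _ = 1 := by rw [htr']; ring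
  have hP : ∑ i, ∑ j, (x i * x j) ^ 2 = 1 := by
    simp only [mul_pow]
    rw [← Finset.sum_mul_sum, hunit, one_mul]
  simp only [Matrix.sub_apply, Matrix.smul_apply, Matrix.vecMulVec_apply, smul_eq_mul]
  have h1 : ∑ i, ∑ j, μ * (x i * x j) * (x i * x j - X i j)
      - ∑ i, ∑ j, (μ/2) * (x i * x j - X i j)^2
      = μ/2 * (∑ i, ∑ j, (x i * x j)^2) - μ/2 * (∑ i, ∑ j, X i j^2) := by
    simp only [Finset.mul_sum, ← Finset.sum_sub_distrib]
    exact Finset.sum_congr rfl fun i _ => Finset.sum_congr rfl fun j _ => by ring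
  have h2 : (μ/2) * ∑ i, ∑ j, (x i * x j - X i j)^2
      = ∑ i, ∑ j, (μ/2) * (x i * x j - X i j)^2 := by
    simp [Finset.mul_sum]
  rw [h2]
  rw [hP] at h1
  nlinarith [h1, hB, hμ.le]
end

section
/- Suppose X̂ is a feasible point of the Sparse PCA SDP (X̂ ⪰ 0, Tr X̂ = 1, ‖X̂‖₁ ≤ s) with ⟨X̂ − x*x*ᵀ, Σ̂⟩ ≥ 0, where x* is an s-sparse unit vector and Σ = μ x*x*ᵀ with μ > 0. Then ‖x*x*ᵀ − X̂‖_F² ≤ (4s/μ)·‖Σ̂ − Σ‖_∞, where ‖·‖₁ and ‖·‖_∞ are the entrywise ℓ1 and ℓ∞ matrix norms. -/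
open Finset Matrix

/-- Deterministic error bound for the Sparse PCA SDP: if `X̂` is feasible
(PSD, trace one, entrywise ℓ1 norm at most `s`) and has objective value at least
that of `x*x*ᵀ`, where `x*` is an `s`-sparse unit vector and `Σ = μ x*x*ᵀ`, then
`‖x*x*ᵀ − X̂‖_F² ≤ (4s/μ)‖Σ̂ − Σ‖_∞`. -/
theorem sparse_pca_error_bound {n s : ℕ} (μ : ℝ) (hμ : 0 < μ)
    (x : Fin n → ℝ)
    (hsparse : (Finset.univ.filter fun i => x i ≠ 0).card ≤ s)
    (hunit : ∑ i, x i ^ 2 = 1)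
    (Shat Xhat : Matrix (Fin n) (Fin n) ℝ)
    (hpsd : Xhat.PosSemidef) (htr : Xhat.trace = 1)
    (hl1 : ∑ i, ∑ j, |Xhat i j| ≤ (s : ℝ))
    (hopt : 0 ≤ ∑ i, ∑ j, (Xhat - Matrix.vecMulVec x x) i j * Shat i j) :
    ∑ i, ∑ j, ((Matrix.vecMulVec x x - Xhat) i j) ^ 2 ≤
      (4 * s / μ) * ⨆ i, ⨆ j, |(Shat - μ • Matrix.vecMulVec x x) i j| := by
  set Xs : Matrix (Fin n) (Fin n) ℝ := Matrix.vecMulVec x x with hXsdef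
  set D : Matrix (Fin n) (Fin n) ℝ := Shat - μ • Xs with hDdef
  set M : ℝ := ⨆ i, ⨆ j, |D i j| with hMdef
  have hMnonneg : 0 ≤ M :=
    Real.iSup_nonneg fun i => Real.iSup_nonneg fun j => abs_nonneg _
  have hMbd : ∀ i j, |D i j| ≤ M := fun i j =>
    le_trans (le_ciSup (f := fun j => |D i j|) (Set.Finite.bddAbove (Set.finite_range _)) j)
      (le_ciSup (f := fun i => ⨆ j, |D i j|) (Set.Finite.bddAbove (Set.finite_range _)) i)
  -- entrywise PSD bound and diag nonneg
  have hentry : ∀ i j, Xhat i j ^ 2 ≤ Xhat i i * Xhat j j := by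
    intro i j
    have hsym : Xhat j i = Xhat i j := by
      have := congrFun (congrFun hpsd.1 i) j
      simpa using this
    have key : ∀ t : ℝ, 0 ≤ Xhat i i * (t * t) + (2 * Xhat i j) * t + Xhat j j := by
      intro t
      have h := hpsd.dotProduct_mulVec_nonneg (fun k => t * (if k = i then 1 else 0) + (if k = j then 1 else 0))
      simp only [star_trivial, dotProduct, mulVec, mul_add, add_mul, mul_ite, ite_mul,
        mul_one, mul_zero, zero_mul, one_mul, Finset.sum_add_distrib, Finset.mul_sum,
        Finset.sum_ite_eq, Finset.sum_ite_eq', Finset.mem_univ, if_true] at h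
      rw [hsym] at h
      nlinarith [h]
    have hd := discrim_le_zero key
    simp only [discrim] at hd
    nlinarith [hd]
  have htr' : ∑ i, Xhat i i = 1 := htr
  -- Frobenius norm of Xhat at most 1
  have hC : ∑ i, ∑ j, Xhat i j ^ 2 ≤ 1 := by
    calc ∑ i, ∑ j, Xhat i j ^ 2 ≤ ∑ i, ∑ j, Xhat i i * Xhat j j :=
          Finset.sum_le_sum fun i _ => Finset.sum_le_sum fun j _ => hentry i j
      _ = (∑ i, Xhat i i) * (∑ j, Xhat j j) := (Finset.sum_mul_sum _ _ _ _).symm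
      _ = 1 := by rw [htr']; ring
  -- ℓ1 norm of x squared at most s
  have hxl1 : (∑ i, |x i|) ^ 2 ≤ (s : ℝ) := by
    have h1 : ∑ i, |x i| = ∑ i ∈ Finset.univ.filter (fun i => x i ≠ 0), |x i| := by
      rw [Finset.sum_filter_of_ne]
      intro i _ h
      simp only [ne_eq]
      intro hx; rw [hx] at h; simp at h
    have h2 := sq_sum_le_card_mul_sum_sq
      (s := Finset.univ.filter (fun i => x i ≠ 0)) (f := fun i => |x i|)
    have h3 : ∑ i ∈ Finset.univ.filter (fun i => x i ≠ 0), |x i| ^ 2 ≤ 1 := by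
      rw [← hunit]
      refine Finset.sum_le_sum_of_subset_of_nonneg (Finset.filter_subset _ _) ?_ |>.trans ?_
      · intro i _ _; positivity
      · exact le_of_eq (Finset.sum_congr rfl fun i _ => sq_abs _)
    have h4 : ((Finset.univ.filter (fun i => x i ≠ 0)).card : ℝ) ≤ (s : ℝ) := by
      exact_mod_cast hsparse
    calc (∑ i, |x i|) ^ 2
        = (∑ i ∈ Finset.univ.filter (fun i => x i ≠ 0), |x i|) ^ 2 := by rw [h1]
      _ ≤ ((Finset.univ.filter (fun i => x i ≠ 0)).card : ℝ) *
            ∑ i ∈ Finset.univ.filter (fun i => x i ≠ 0), |x i| ^ 2 := by exact_mod_cast h2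
      _ ≤ (s : ℝ) * 1 := by
          apply mul_le_mul h4 h3 (Finset.sum_nonneg fun i _ => by positivity) (by positivity)
      _ = s := mul_one _
  -- ℓ1 norm of Xs
  have hXsl1 : ∑ i, ∑ j, |Xs i j| ≤ (s : ℝ) := by
    calc ∑ i, ∑ j, |Xs i j| = ∑ i, ∑ j, |x i| * |x j| := by
          refine Finset.sum_congr rfl fun i _ => Finset.sum_congr rfl fun j _ => ?_
          rw [hXsdef, vecMulVec_apply, abs_mul]
      _ = (∑ i, |x i|) * (∑ j, |x j|) := (Finset.sum_mul_sum _ _ _ _).symm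
      _ = (∑ i, |x i|) ^ 2 := (sq _).symm
      _ ≤ s := hxl1
  -- ℓ1 bound on difference
  have hdiffl1 : ∑ i, ∑ j, |(Xhat - Xs) i j| ≤ 2 * s := by
    calc ∑ i, ∑ j, |(Xhat - Xs) i j| ≤ ∑ i, ∑ j, (|Xhat i j| + |Xs i j|) := by
          refine Finset.sum_le_sum fun i _ => Finset.sum_le_sum fun j _ => ?_
          rw [Matrix.sub_apply]; exact abs_sub _ _
      _ = (∑ i, ∑ j, |Xhat i j|) + ∑ i, ∑ j, |Xs i j| := by
          rw [← Finset.sum_add_distrib]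
          exact Finset.sum_congr rfl fun i _ => Finset.sum_add_distrib
      _ ≤ s + s := add_le_add hl1 hXsl1
      _ = 2 * s := by ring
  -- Hölder
  have hholder : ∑ i, ∑ j, (Xhat - Xs) i j * D i j ≤ 2 * s * M := by
    calc ∑ i, ∑ j, (Xhat - Xs) i j * D i j ≤ ∑ i, ∑ j, |(Xhat - Xs) i j| * M := by
          refine Finset.sum_le_sum fun i _ => Finset.sum_le_sum fun j _ => ?_
          calc (Xhat - Xs) i j * D i j ≤ |(Xhat - Xs) i j * D i j| := le_abs_self _
            _ = |(Xhat - Xs) i j| * |D i j| := abs_mul _ _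
            _ ≤ |(Xhat - Xs) i j| * M :=
                mul_le_mul_of_nonneg_left (hMbd i j) (abs_nonneg _)
      _ = (∑ i, ∑ j, |(Xhat - Xs) i j|) * M := by
          rw [Finset.sum_mul]
          exact Finset.sum_congr rfl fun i _ => (Finset.sum_mul _ _ _).symm
      _ ≤ 2 * s * M := mul_le_mul_of_nonneg_right hdiffl1 hMnonneg
  -- key sums
  set q : ℝ := ∑ i, ∑ j, x i * x j * Xhat i j with hq
  have hone : ∑ i, ∑ j, x i ^ 2 * x j ^ 2 = 1 := by
    rw [← Finset.sum_mul_sum, hunit, mul_one]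
  have E1 : ∑ i, ∑ j, ((Xs - Xhat) i j) ^ 2 =
      1 - 2 * q + ∑ i, ∑ j, Xhat i j ^ 2 := by
    have : ∀ i j, ((Xs - Xhat) i j) ^ 2 =
        x i ^ 2 * x j ^ 2 - 2 * (x i * x j * Xhat i j) + Xhat i j ^ 2 := by
      intro i j
      rw [Matrix.sub_apply, hXsdef, vecMulVec_apply]; ring
    have expand : ∑ i, ∑ j, ((Xs - Xhat) i j) ^ 2 =
        (∑ i, ∑ j, x i ^ 2 * x j ^ 2) - 2 * q +
          ∑ i, ∑ j, Xhat i j ^ 2 := by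
      simp_rw [this, Finset.sum_add_distrib, Finset.sum_sub_distrib, hq, Finset.mul_sum]
    rw [expand, hone]
  have E4 : (∑ i, ∑ j, (Xhat - Xs) i j * Shat i j) -
      (∑ i, ∑ j, (Xhat - Xs) i j * D i j) = μ * q - μ := by
    have hterm : ∀ i j, (Xhat - Xs) i j * Shat i j - (Xhat - Xs) i j * D i j =
        μ * (x i * x j * Xhat i j) - μ * (x i ^ 2 * x j ^ 2) := by
      intro i j
      rw [hDdef, hXsdef]
      simp only [Matrix.sub_apply, Matrix.smul_apply, vecMulVec_apply, smul_eq_mul]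
      ring
    calc (∑ i, ∑ j, (Xhat - Xs) i j * Shat i j) -
        (∑ i, ∑ j, (Xhat - Xs) i j * D i j)
        = ∑ i, ∑ j, ((Xhat - Xs) i j * Shat i j - (Xhat - Xs) i j * D i j) := by
          rw [← Finset.sum_sub_distrib]
          exact Finset.sum_congr rfl fun i _ => (Finset.sum_sub_distrib ..).symm
      _ = ∑ i, ∑ j, (μ * (x i * x j * Xhat i j) - μ * (x i ^ 2 * x j ^ 2)) := by
          exact Finset.sum_congr rfl fun i _ => Finset.sum_congr rfl fun j _ => hterm i j
      _ = (∑ i, ∑ j, μ * (x i * x j * Xhat i j)) -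
            ∑ i, ∑ j, μ * (x i ^ 2 * x j ^ 2) := by
          simp_rw [Finset.sum_sub_distrib]
      _ = μ * q - μ := by
          rw [hq]
          simp_rw [Finset.mul_sum]
          congr 1
          calc ∑ i, ∑ j, μ * (x i ^ 2 * x j ^ 2)
              = μ * ∑ i, ∑ j, x i ^ 2 * x j ^ 2 := by simp_rw [Finset.mul_sum]
            _ = μ := by rw [hone, mul_one]
  -- combine
  have hkey : μ * q - μ ≥ -(2 * s * M) := by
    linarith [E4, hholder, hopt]
  rw [div_mul_eq_mul_div, le_div_iff₀ hμ, E1]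
  nlinarith [hkey, hMnonneg, mul_le_mul_of_nonneg_right hC hμ.le]
end
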